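/- If an ultrametric space X has a dense subset of cardinality κ, then the set R(X) of nonzero distances realized in X has cardinality at most κ. -/

import Mathlib

/-!
In an ultrametric space every point of a ball is its centre, so moving the endpoints of a
segment `[x, y]` by less than `dist x y` does not change its length. Hence every nonzero
distance is already realized by two points of a dense set `s`, and there are at most
`#s * #s ≤ κ * κ = κ` of them.
-/

open Cardinal Set

namespace IsUltrametricDist

variable {X : Type*} [PseudoMetricSpace X] [IsUltrametricDist X]

lemma dist_eq_of_dist_lt_left {x x' y : X} (h : dist x' x < dist x y) :
    dist x' y = dist x y := by
  rw [dist_eq_max_of_dist_ne_dist x' x y h.ne, max_eq_right h.le]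

lemma dist_eq_of_dist_lt_of_dist_lt {x x' y y' : X} (hx : dist x' x < dist x y)
    (hy : dist y' y < dist x y) : dist x' y' = dist x y := by
  have hx' : dist x' y = dist x y := dist_eq_of_dist_lt_left hx
  rw [← hx', dist_comm x' y] at hy
  rw [dist_comm, dist_eq_of_dist_lt_left hy, dist_comm, hx']

end IsUltrametricDist

open IsUltrametricDist in
lemma Dense.setOf_dist_ne_subset_image2_dist {X : Type*} [MetricSpace X] [IsUltrametricDist X]
    {s : Set X} (hs : Dense s) :
    {r : ℝ | ∃ x y : X, x ≠ y ∧ dist x y = r} ⊆ image2 dist s s := by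
  rintro r ⟨x, y, hxy, rfl⟩
  have hr : 0 < dist x y := dist_pos.mpr hxy
  obtain ⟨x', hx's, hx'⟩ := hs.exists_dist_lt x hr
  obtain ⟨y', hy's, hy'⟩ := hs.exists_dist_lt y hr
  rw [dist_comm] at hx' hy'
  exact ⟨x', hx's, y', hy's, dist_eq_of_dist_lt_of_dist_lt hx' hy'⟩

/-- If an ultrametric space `X` has a dense subset of cardinality at most `κ` (`κ` infinite),
then the set of nonzero realized distances of `X` has cardinality at most `κ`. -/
theorem ultrametric_card_realized_distances {X : Type} [MetricSpace X] [IsUltrametricDist X]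
    (κ : Cardinal) (hκ : Cardinal.aleph0 ≤ κ) (s : Set X) (hs : Dense s)
    (hcard : Cardinal.mk s ≤ κ) :
    Cardinal.mk {r : ℝ | ∃ x y : X, x ≠ y ∧ dist x y = r} ≤ κ :=
  calc #{r : ℝ | ∃ x y : X, x ≠ y ∧ dist x y = r}
      ≤ #(image2 dist s s) := mk_le_mk_of_subset hs.setOf_dist_ne_subset_image2_dist
    _ ≤ #s * #s := mk_image2_le
    _ ≤ κ * κ := mul_le_mul' hcard hcard
    _ = κ := mul_eq_self hκ
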